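/- arXiv:2510.09265 — 2 statements merged into one kernel-verified Lean document; each statement's English description precedes it below -/
import Mathlib

section
/- Let 1 ≤ k ≤ d-1 and let u_k = (-(d-k), 1, ..., 1, 0, ..., 0) in R^d, with d-k entries equal to 1 followed by k-1 entries equal to 0. Then the vertices of the cube C_d lying on the hyperplane u_k^⊥ are exactly those with x_1 = x_2 = ... = x_{d-k+1} = 1 or x_1 = x_2 = ... = x_{d-k+1} = -1, these vertices span a k-dimensional linear subspace, and the projection R^d → R^{d-1} forgetting the first coordinate restricts to an affine isomorphism from C_d ∩ u_k^⊥ onto C_{d-1}; in particular C_d ∩ u_k^⊥ is combinatorially equivalent to C_{d-1}. -/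
open scoped RealInnerProductSpace

noncomputable section

/-- The `d`-dimensional cube `C_d = [-1,1]^d`. -/
def cube (d : ℕ) : Set (EuclideanSpace ℝ (Fin d)) := {x | ∀ i, |x i| ≤ 1}

/-- The vertex set `{-1,1}^d` of the cube `C_d`. -/
def cubeVertices (d : ℕ) : Set (EuclideanSpace ℝ (Fin d)) := {x | ∀ i, x i = 1 ∨ x i = -1}

/-- The (affine) dimension of a subset of Euclidean space: the dimension of the direction of
its affine span. -/
def adim {d : ℕ} (S : Set (EuclideanSpace ℝ (Fin d))) : ℕ :=
  Module.finrank ℝ (affineSpan ℝ S).direction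

/-- Two sets (e.g. polytopes) are combinatorially equivalent if their posets of exposed faces
(i.e., their face lattices), ordered by inclusion, are order-isomorphic. -/
def CombEquiv {d e : ℕ} (P : Set (EuclideanSpace ℝ (Fin d)))
    (Q : Set (EuclideanSpace ℝ (Fin e))) : Prop :=
  Nonempty ({F : Set (EuclideanSpace ℝ (Fin d)) // IsExposed ℝ P F} ≃o
            {G : Set (EuclideanSpace ℝ (Fin e)) // IsExposed ℝ Q G})

lemma isExposed_image_of_clm {d e : ℕ} {P : Set (EuclideanSpace ℝ (Fin d))}
    {Q : Set (EuclideanSpace ℝ (Fin e))}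
    (f : EuclideanSpace ℝ (Fin d) →L[ℝ] EuclideanSpace ℝ (Fin e))
    (g : EuclideanSpace ℝ (Fin e) →L[ℝ] EuclideanSpace ℝ (Fin d))
    (hfP : Set.MapsTo f P Q) (hgQ : Set.MapsTo g Q P)
    (hgf : ∀ x ∈ P, g (f x) = x) (hfg : ∀ y ∈ Q, f (g y) = y)
    {B : Set (EuclideanSpace ℝ (Fin d))} (hB : IsExposed ℝ P B) :
    IsExposed ℝ Q (f '' B) := by
  rintro ⟨q0, x1, hx1, rfl⟩
  obtain ⟨l, hl⟩ := hB ⟨x1, hx1⟩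
  refine ⟨l.comp g, ?_⟩
  ext q
  constructor
  · rintro ⟨x, hx, rfl⟩
    rw [hl] at hx
    obtain ⟨hxP, hxmax⟩ := hx
    refine ⟨hfP hxP, fun y hy => ?_⟩
    simp only [ContinuousLinearMap.comp_apply]
    rw [hgf x hxP]
    exact hxmax _ (hgQ hy)
  · rintro ⟨hqQ, hqmax⟩
    refine ⟨g q, ?_, ?_⟩
    · rw [hl]
      refine ⟨hgQ hqQ, fun y hy => ?_⟩
      have := hqmax (f y) (hfP hy)
      simpa [hgf y hy] using this
    · exact hfg q hqQ

lemma combEquiv_of_clm {d e : ℕ} {P : Set (EuclideanSpace ℝ (Fin d))}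
    {Q : Set (EuclideanSpace ℝ (Fin e))}
    (f : EuclideanSpace ℝ (Fin d) →L[ℝ] EuclideanSpace ℝ (Fin e))
    (g : EuclideanSpace ℝ (Fin e) →L[ℝ] EuclideanSpace ℝ (Fin d))
    (hfP : Set.MapsTo f P Q) (hgQ : Set.MapsTo g Q P)
    (hgf : ∀ x ∈ P, g (f x) = x) (hfg : ∀ y ∈ Q, f (g y) = y) :
    Nonempty ({F : Set (EuclideanSpace ℝ (Fin d)) // IsExposed ℝ P F} ≃o
              {G : Set (EuclideanSpace ℝ (Fin e)) // IsExposed ℝ Q G}) := by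
  have key1 : ∀ {B}, IsExposed ℝ P B → IsExposed ℝ Q (f '' B) := by
    intro B hB
    exact isExposed_image_of_clm f g hfP hgQ hgf hfg hB
  have key2 : ∀ {G}, IsExposed ℝ Q G → IsExposed ℝ P (g '' G) := by
    intro G hG
    exact isExposed_image_of_clm g f hgQ hfP hfg hgf hG
  have hid1 : ∀ B : Set (EuclideanSpace ℝ (Fin d)), B ⊆ P → g '' (f '' B) = B := by
    intro B hBP
    rw [Set.image_image]
    ext x
    constructor
    · rintro ⟨y, hy, rfl⟩
      show g (f y) ∈ B
      rwa [hgf y (hBP hy)]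
    · intro hx
      exact ⟨x, hx, hgf x (hBP hx)⟩
  have hid2 : ∀ G : Set (EuclideanSpace ℝ (Fin e)), G ⊆ Q → f '' (g '' G) = G := by
    intro G hGQ
    rw [Set.image_image]
    ext y
    constructor
    · rintro ⟨z, hz, rfl⟩
      show f (g z) ∈ G
      rwa [hfg z (hGQ hz)]
    · intro hy
      exact ⟨y, hy, hfg y (hGQ hy)⟩
  refine ⟨{ toFun := fun B => ⟨f '' B.1, key1 B.2⟩
            invFun := fun G => ⟨g '' G.1, key2 G.2⟩
            left_inv := ?_
            right_inv := ?_
            map_rel_iff' := ?_ }⟩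
  · rintro ⟨B, hB⟩
    exact Subtype.ext (hid1 B hB.subset)
  · rintro ⟨G, hG⟩
    exact Subtype.ext (hid2 G hG.subset)
  · rintro ⟨B, hB⟩ ⟨B', hB'⟩
    show f '' B ⊆ f '' B' ↔ B ⊆ B'
    constructor
    · intro h
      have := Set.image_mono (f := g) h
      rwa [hid1 B hB.subset, hid1 B' hB'.subset] at this
    · exact fun h => Set.image_mono h

/-- The linear embedding of `ℝ^k` into `ℝ^d` whose image is the span of the slice vertices. -/
def sliceMap (d k : ℕ) (hdk : k ≤ d) (hk : 1 ≤ k) :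
    EuclideanSpace ℝ (Fin k) →ₗ[ℝ] EuclideanSpace ℝ (Fin d) where
  toFun y := WithLp.toLp 2 (fun i : Fin d => if (i : ℕ) ≤ d - k then y ⟨0, hk⟩
    else y ⟨(i : ℕ) - (d - k), by have := i.isLt; omega⟩)
  map_add' y z := by
    ext i
    by_cases h : (i : ℕ) ≤ d - k <;> simp [h]
  map_smul' c y := by
    ext i
    by_cases h : (i : ℕ) ≤ d - k <;> simp [h]

lemma sliceMap_inj (d k : ℕ) (hdk : k ≤ d) (hk : 1 ≤ k) :
    Function.Injective (sliceMap d k hdk hk) := by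
  intro y z h
  ext j
  by_cases hj : (j : ℕ) = 0
  · have h0 := congrArg (fun v : EuclideanSpace ℝ (Fin d) => v ⟨0, by omega⟩) h
    simp only [sliceMap, LinearMap.coe_mk, AddHom.coe_mk, PiLp.toLp_apply] at h0
    rw [if_pos (by simp)] at h0
    have hj0 : j = ⟨0, hk⟩ := Fin.ext hj
    rw [hj0]
    simpa using h0
  · have hlt := j.isLt
    have h0 := congrArg (fun v : EuclideanSpace ℝ (Fin d) => v ⟨(j : ℕ) + (d - k), by omega⟩) h
    simp only [sliceMap, LinearMap.coe_mk, AddHom.coe_mk, PiLp.toLp_apply] at h0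
    have hcond : ¬((j : ℕ) + (d - k) ≤ d - k) := by omega
    have heq : (⟨(j : ℕ) + (d - k) - (d - k), by omega⟩ : Fin k) = j := Fin.ext (by simp)
    simp only [if_neg hcond] at h0
    rw [heq] at h0
    exact h0

set_option maxHeartbeats 2000000 in
/-- Let `1 ≤ k ≤ d-1` and `u_k = (-(d-k), 1, …, 1, 0, …, 0)` (with `d-k` ones and `k-1`
zeros). Then the vertices of `C_d` on the hyperplane `u_k^⊥` are exactly those whose first
`d-k+1` coordinates are all `1` or all `-1`; these vertices span a `k`-dimensional linear
subspace; the projection forgetting the first coordinate is linear and restricts to a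
bijection from `C_d ∩ u_k^⊥` onto `C_{d-1}`; and `C_d ∩ u_k^⊥` is combinatorially equivalent
to `C_{d-1}`. -/
theorem explicit_cube_slice (d k : ℕ) (hk1 : 1 ≤ k) (hkd : k ≤ d - 1) (hd : 2 ≤ d)
    (u : EuclideanSpace ℝ (Fin d))
    (hu : ∀ i : Fin d, u i =
      if (i : ℕ) = 0 then -((d : ℝ) - (k : ℝ)) else if (i : ℕ) ≤ d - k then 1 else 0)
    (proj : EuclideanSpace ℝ (Fin d) → EuclideanSpace ℝ (Fin (d - 1)))
    (hproj : ∀ (x : EuclideanSpace ℝ (Fin d)) (j : Fin (d - 1)),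
      proj x j = x ⟨(j : ℕ) + 1, by have := j.isLt; omega⟩) :
    cubeVertices d ∩ {x | ⟪u, x⟫ = 0}
      = {v ∈ cubeVertices d |
          (∀ i : Fin d, (i : ℕ) ≤ d - k → v i = 1) ∨ (∀ i : Fin d, (i : ℕ) ≤ d - k → v i = -1)} ∧
    Module.finrank ℝ (Submodule.span ℝ (cubeVertices d ∩ {x | ⟪u, x⟫ = 0})) = k ∧
    IsLinearMap ℝ proj ∧
    Set.BijOn proj (cube d ∩ {x | ⟪u, x⟫ = 0}) (cube (d - 1)) ∧
    CombEquiv (cube d ∩ {x | ⟪u, x⟫ = 0}) (cube (d - 1)) := by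
  have hdk : k ≤ d := by omega
  set m := d - k with hm
  have hm1 : 1 ≤ m := by omega
  have hmd : m ≤ d - 1 := by omega
  have hmk : m + k = d := by omega
  have hmR : (0:ℝ) < (m:ℝ) := by exact_mod_cast hm1
  set i0 : Fin d := ⟨0, by omega⟩ with hi0
  set s : Finset (Fin d) :=
    Finset.univ.filter (fun i : Fin d => 1 ≤ (i : ℕ) ∧ (i : ℕ) ≤ m) with hs
  set s' : Finset (Fin (d - 1)) :=
    Finset.univ.filter (fun j : Fin (d - 1) => (j : ℕ) < m) with hs'
  have hmem_s : ∀ i : Fin d, i ∈ s ↔ (1 ≤ (i : ℕ) ∧ (i : ℕ) ≤ m) := by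
    intro i; simp [hs]
  have hmem_s' : ∀ j : Fin (d - 1), j ∈ s' ↔ (j : ℕ) < m := by
    intro j; simp [hs']
  -- the index shift between s' and s
  have hsum : ∀ f : Fin d → ℝ,
      ∑ j ∈ s', f ⟨(j : ℕ) + 1, by have := j.isLt; omega⟩ = ∑ i ∈ s, f i := by
    intro f
    refine Finset.sum_nbij' (fun j : Fin (d-1) => (⟨(j : ℕ) + 1, by have := j.isLt; omega⟩ : Fin d))
      (fun i : Fin d => (⟨(i : ℕ) - 1, by have := i.isLt; omega⟩ : Fin (d-1))) ?_ ?_ ?_ ?_ ?_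
    · intro a ha
      rw [hmem_s' a] at ha
      rw [hmem_s]
      simp; omega
    · intro a ha
      rw [hmem_s a] at ha
      rw [hmem_s']
      simp; omega
    · intro a ha
      exact Fin.ext (by simp)
    · intro a ha
      rw [hmem_s a] at ha
      exact Fin.ext (by simp; omega)
    · intro a ha
      rfl
  have hcard' : s'.card = m := by
    rw [← Finset.card_range m]
    refine Finset.card_bij (fun j _ => (j : ℕ)) ?_ ?_ ?_
    · intro a ha
      rw [hmem_s' a] at ha
      simpa [Finset.mem_range] using ha
    · intro a _ b _ h
      exact Fin.ext h
    · intro n hn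
      rw [Finset.mem_range] at hn
      exact ⟨⟨n, by omega⟩, by rw [hmem_s']; simpa, rfl⟩
  have hcard : s.card = m := by
    have h := hsum (fun _ => (1:ℝ))
    simp only [Finset.sum_const, nsmul_eq_mul, mul_one] at h
    have : (s'.card : ℝ) = (s.card : ℝ) := h
    rw [← hcard']
    exact_mod_cast this.symm
  have hinner : ∀ x : EuclideanSpace ℝ (Fin d), ⟪u, x⟫ = ∑ i ∈ s, (x i - x i0) := by
    intro x
    have h1 : ⟪u, x⟫ = ∑ i : Fin d, u i * x i := by
      simp [PiLp.inner_apply]; exact Finset.sum_congr rfl fun i _ => mul_comm _ _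
    rw [h1]
    have hcast : ((d:ℝ) - (k:ℝ)) = (m:ℝ) := by
      rw [hm, Nat.cast_sub hdk]
    have hterm : ∀ i : Fin d, u i * x i =
        (if i ∈ s then x i else 0) + (if i = i0 then -(m:ℝ) * x i0 else 0) := by
      intro i
      rw [hu i]
      by_cases h0 : (i : ℕ) = 0
      · have hii : i = i0 := Fin.ext (by simp [hi0, h0])
        rw [if_pos h0, if_neg (by rw [hmem_s]; omega), if_pos hii, hcast, hii]
        ring
      · have hnii : ¬(i = i0) := by
          intro hcon
          apply h0
          rw [hcon, hi0]
        by_cases hle : (i : ℕ) ≤ m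
        · rw [if_neg h0, if_pos hle, if_pos (by rw [hmem_s]; omega), if_neg hnii]
          ring
        · rw [if_neg h0, if_neg hle, if_neg (by rw [hmem_s]; omega), if_neg hnii]
          ring
    rw [Finset.sum_congr rfl fun i _ => hterm i, Finset.sum_add_distrib,
      Finset.sum_ite_mem, Finset.univ_inter,
      Finset.sum_ite_eq' Finset.univ i0 (fun _ => -(m:ℝ) * x i0),
      if_pos (Finset.mem_univ i0), Finset.sum_sub_distrib, Finset.sum_const, hcard,
      nsmul_eq_mul]
    ring
  -- helper: membership of constant-block vertices in the slice
  have hVmem : ∀ (w : EuclideanSpace ℝ (Fin d)), (∀ i, w i = 1 ∨ w i = -1) →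
      (∀ i : Fin d, (i : ℕ) ≤ m → w i = w i0) →
      w ∈ cubeVertices d ∩ {x | ⟪u, x⟫ = 0} := by
    intro w hw hconst
    refine ⟨hw, ?_⟩
    show ⟪u, w⟫ = 0
    rw [hinner w]
    refine Finset.sum_eq_zero fun i hi => ?_
    rw [hmem_s i] at hi
    rw [hconst i hi.2]
    ring
  -- Part 1
  have hpart1 : cubeVertices d ∩ {x | ⟪u, x⟫ = 0}
      = {v ∈ cubeVertices d |
          (∀ i : Fin d, (i : ℕ) ≤ m → v i = 1) ∨ (∀ i : Fin d, (i : ℕ) ≤ m → v i = -1)} := by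
    ext v
    simp only [Set.mem_inter_iff, Set.mem_setOf_eq, Set.mem_sep_iff]
    constructor
    · rintro ⟨hv, hz⟩
      rw [hinner v] at hz
      have hne : v i0 ≠ 0 := by rcases hv i0 with h | h <;> rw [h] <;> norm_num
      have hkey : ∀ i ∈ s, v i = v i0 := by
        have h1 : ∀ i ∈ s, v i0 * (v i - v i0) ≤ 0 := by
          intro i _
          rcases hv i with h | h <;> rcases hv i0 with h0 | h0 <;> rw [h, h0] <;> norm_num
        have h2 : ∑ i ∈ s, v i0 * (v i - v i0) = 0 := by
          rw [← Finset.mul_sum, hz, mul_zero]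
        intro i hi
        have h3 := (Finset.sum_eq_zero_iff_of_nonpos h1).mp h2 i hi
        rcases mul_eq_zero.mp h3 with h | h
        · exact absurd h hne
        · linarith
      refine ⟨hv, ?_⟩
      rcases hv i0 with h0 | h0
      · left
        intro i hi
        by_cases hz0 : (i : ℕ) = 0
        · have : i = i0 := Fin.ext (by simp [hi0, hz0])
          rw [this, h0]
        · rw [hkey i (by rw [hmem_s]; omega), h0]
      · right
        intro i hi
        by_cases hz0 : (i : ℕ) = 0
        · have : i = i0 := Fin.ext (by simp [hi0, hz0])
          rw [this, h0]
        · rw [hkey i (by rw [hmem_s]; omega), h0]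
    · rintro ⟨hv, hcase⟩
      refine ⟨hv, ?_⟩
      rw [hinner v]
      refine Finset.sum_eq_zero fun i hi => ?_
      rw [hmem_s] at hi
      have h0m : ((i0 : Fin d) : ℕ) ≤ m := by simp [hi0]
      rcases hcase with h | h
      · rw [h i hi.2, h i0 h0m]; ring
      · rw [h i hi.2, h i0 h0m]; ring
  -- Part 2
  have hpart2 : Module.finrank ℝ (Submodule.span ℝ (cubeVertices d ∩ {x | ⟪u, x⟫ = 0})) = k := by
    rw [hpart1]
    have hinj := sliceMap_inj d k hdk hk1
    set φ := sliceMap d k hdk hk1 with hphi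
    set V : Set (EuclideanSpace ℝ (Fin d)) := {v ∈ cubeVertices d |
      (∀ i : Fin d, (i : ℕ) ≤ m → v i = 1) ∨ (∀ i : Fin d, (i : ℕ) ≤ m → v i = -1)} with hV
    have happly : ∀ (y : EuclideanSpace ℝ (Fin k)) (i : Fin d),
        φ y i = if (i : ℕ) ≤ m then y ⟨0, hk1⟩
          else y ⟨(i : ℕ) - m, by have := i.isLt; omega⟩ := by
      intro y i
      rfl
    have hrange : Submodule.span ℝ V = LinearMap.range φ := by
      apply le_antisymm
      · rw [Submodule.span_le]
        rintro v ⟨hv, hcase⟩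
        have hε : ∃ ε : ℝ, ∀ i : Fin d, (i : ℕ) ≤ m → v i = ε := by
          rcases hcase with h | h
          exacts [⟨1, h⟩, ⟨-1, h⟩]
        obtain ⟨ε, hε⟩ := hε
        refine ⟨WithLp.toLp 2 (fun j : Fin k => if (j : ℕ) = 0 then ε
          else v ⟨(j : ℕ) + m, by have := j.isLt; omega⟩ : Fin k → ℝ), ?_⟩
        ext i
        rw [happly]
        rw [PiLp.toLp_apply, PiLp.toLp_apply]
        by_cases him : (i : ℕ) ≤ m
        · rw [if_pos him, if_pos rfl, hε i him]
        · rw [if_neg him, PiLp.toLp_apply, if_neg (by show ¬ ((i : ℕ) - m = 0); omega)]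
          exact congrArg v.ofLp (Fin.ext (by show (i : ℕ) - m + m = i; omega))
      · rintro x ⟨y, rfl⟩
        have hy : y ∈ Submodule.span ℝ
            (Set.range fun j : Fin k =>
              (EuclideanSpace.single j (1:ℝ) : EuclideanSpace ℝ (Fin k))) := by
          have hfeq : (fun j : Fin k =>
              (EuclideanSpace.single j (1:ℝ) : EuclideanSpace ℝ (Fin k)))
              = ⇑((EuclideanSpace.basisFun (Fin k) ℝ).toBasis) := by
            funext j
            simp [EuclideanSpace.basisFun_apply]
          rw [hfeq, Module.Basis.span_eq]
          exact Submodule.mem_top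
        have hmem : φ y ∈ Submodule.map φ (Submodule.span ℝ
            (Set.range fun j : Fin k =>
              (EuclideanSpace.single j (1:ℝ) : EuclideanSpace ℝ (Fin k)))) := ⟨y, hy, rfl⟩
        rw [Submodule.map_span] at hmem
        refine Submodule.span_le.mpr ?_ hmem
        rintro w ⟨_, ⟨j, rfl⟩, rfl⟩
        by_cases hj : (j : ℕ) = 0
        · set vA : EuclideanSpace ℝ (Fin d) := WithLp.toLp 2 (fun _ => 1 : Fin d → ℝ) with hvA
          set vB : EuclideanSpace ℝ (Fin d) :=
            WithLp.toLp 2 (fun i => if (i : ℕ) ≤ m then 1 else -1 : Fin d → ℝ) with hvB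
          have hA : vA ∈ V := by
            refine ⟨fun i => Or.inl rfl, Or.inl fun i _ => rfl⟩
          have hB : vB ∈ V := by
            constructor
            · intro i
              by_cases h : (i : ℕ) ≤ m
              · left; simp only [hvB, PiLp.toLp_apply]; rw [if_pos h]
              · right; simp only [hvB, PiLp.toLp_apply]; rw [if_neg h]
            · left
              intro i hi
              simp only [hvB, PiLp.toLp_apply]; rw [if_pos hi]
          have hval : φ (EuclideanSpace.single j 1) = (2⁻¹ : ℝ) • (vA + vB) := by
            ext i
            rw [happly]
            have hrhs : ((2⁻¹ : ℝ) • (vA + vB)) i = 2⁻¹ * (vA i + vB i) := by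
              simp [PiLp.smul_apply, PiLp.add_apply, smul_eq_mul]; ring
            rw [hrhs]
            by_cases him : (i : ℕ) ≤ m
            · rw [if_pos him]
              rw [EuclideanSpace.single_apply, if_pos (Fin.ext (by simp [hj]))]
              simp only [hvA, hvB, PiLp.toLp_apply]
              rw [if_pos him]
              norm_num
            · rw [if_neg him]
              rw [EuclideanSpace.single_apply, if_neg (by
                intro hcon
                have := congrArg (fun t : Fin k => (t : ℕ)) hcon
                simp at this
                omega)]
              simp only [hvA, hvB, PiLp.toLp_apply]
              rw [if_neg him]
              norm_num
          rw [hval]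
          exact Submodule.smul_mem _ _ (Submodule.add_mem _
            (Submodule.subset_span hA) (Submodule.subset_span hB))
        · set vA : EuclideanSpace ℝ (Fin d) := WithLp.toLp 2 (fun _ => 1 : Fin d → ℝ) with hvA
          set vC : EuclideanSpace ℝ (Fin d) :=
            WithLp.toLp 2 (fun i => if (i : ℕ) = (j : ℕ) + m then -1 else 1 : Fin d → ℝ) with hvC
          have hA : vA ∈ V := by
            refine ⟨fun i => Or.inl rfl, Or.inl fun i _ => rfl⟩
          have hC : vC ∈ V := by
            constructor
            · intro i
              by_cases h : (i : ℕ) = (j : ℕ) + m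
              · right; simp only [hvC, PiLp.toLp_apply]; rw [if_pos h]
              · left; simp only [hvC, PiLp.toLp_apply]; rw [if_neg h]
            · left
              intro i hi
              simp only [hvC, PiLp.toLp_apply]
              rw [if_neg (by omega)]
          have hval : φ (EuclideanSpace.single j 1) = (2⁻¹ : ℝ) • (vA - vC) := by
            ext i
            rw [happly]
            have hrhs : ((2⁻¹ : ℝ) • (vA - vC)) i = 2⁻¹ * (vA i - vC i) := by
              simp [PiLp.smul_apply, PiLp.sub_apply, smul_eq_mul]
            rw [hrhs]
            by_cases him : (i : ℕ) ≤ m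
            · rw [if_pos him]
              rw [EuclideanSpace.single_apply, if_neg (by
                intro hcon
                have := congrArg (fun t : Fin k => (t : ℕ)) hcon
                simp at this
                omega)]
              simp only [hvA, hvC, PiLp.toLp_apply]
              rw [if_neg (by omega)]
              norm_num
            · rw [if_neg him]
              simp only [hvA, hvC, PiLp.toLp_apply]
              by_cases hij : (i : ℕ) = (j : ℕ) + m
              · rw [EuclideanSpace.single_apply, if_pos (Fin.ext (by simp; omega)),
                  if_pos hij]
                norm_num
              · rw [EuclideanSpace.single_apply, if_neg (by
                  intro hcon
                  have := congrArg (fun t : Fin k => (t : ℕ)) hcon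
                  simp at this
                  omega), if_neg hij]
                norm_num
          rw [hval]
          exact Submodule.smul_mem _ _ (Submodule.sub_mem _
            (Submodule.subset_span hA) (Submodule.subset_span hC))
    rw [hrange, LinearMap.finrank_range_of_inj hinj, finrank_euclideanSpace_fin]
  -- Part 3
  have hlin : IsLinearMap ℝ proj := by
    constructor
    · intro x y
      ext j
      rw [hproj]
      show x _ + y _ = proj x j + proj y j
      rw [hproj, hproj]
    · intro c x
      ext j
      rw [hproj]
      show c * x _ = c * proj x j
      rw [hproj]
  -- the inverse map
  obtain ⟨gmap, hgmap⟩ : ∃ g : EuclideanSpace ℝ (Fin (d - 1)) → EuclideanSpace ℝ (Fin d),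
      ∀ (y : EuclideanSpace ℝ (Fin (d - 1))) (i : Fin d),
        g y i = if (i : ℕ) = 0 then (m:ℝ)⁻¹ * ∑ j ∈ s', y j
          else y ⟨(i : ℕ) - 1, by have := i.isLt; omega⟩ :=
    ⟨fun y => WithLp.toLp 2 (fun i : Fin d => if (i : ℕ) = 0 then (m:ℝ)⁻¹ * ∑ j ∈ s', y j
      else y ⟨(i : ℕ) - 1, by have := i.isLt; omega⟩ : Fin d → ℝ), fun y i => rfl⟩
  have hglin : IsLinearMap ℝ gmap := by
    constructor
    · intro y z
      ext i
      have hr : (gmap y + gmap z) i = gmap y i + gmap z i := by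
        simp [PiLp.add_apply]
      rw [hr, hgmap (y + z) i, hgmap y i, hgmap z i]
      by_cases h : (i : ℕ) = 0
      · simp only [if_pos h]
        have : ∑ j ∈ s', (y + z) j = ∑ j ∈ s', y j + ∑ j ∈ s', z j := by
          rw [← Finset.sum_add_distrib]
          exact Finset.sum_congr rfl fun j _ => by simp [PiLp.add_apply]
        rw [this]
        ring
      · simp only [if_neg h]
        simp [PiLp.add_apply]
    · intro c y
      ext i
      have hr : (c • gmap y) i = c * gmap y i := by
        simp [PiLp.smul_apply, smul_eq_mul]
      rw [hr, hgmap (c • y) i, hgmap y i]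
      by_cases h : (i : ℕ) = 0
      · simp only [if_pos h]
        have : ∑ j ∈ s', (c • y) j = c * ∑ j ∈ s', y j := by
          rw [Finset.mul_sum]
          exact Finset.sum_congr rfl fun j _ => by simp [PiLp.smul_apply, smul_eq_mul]
        rw [this]
        ring
      · simp only [if_neg h]
        simp [PiLp.smul_apply, smul_eq_mul]
  have hpg : ∀ y, proj (gmap y) = y := by
    intro y
    ext j
    rw [hproj, hgmap]
    rw [if_neg (by simp)]
    exact congrArg y.ofLp (Fin.ext (by simp))
  have hgp : ∀ x ∈ cube d ∩ {x | ⟪u, x⟫ = 0}, gmap (proj x) = x := by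
    intro x hx
    have hsx : ∑ i ∈ s, x i = (m:ℝ) * x i0 := by
      have h := hx.2
      rw [Set.mem_setOf_eq, hinner x, Finset.sum_sub_distrib, Finset.sum_const, hcard,
        nsmul_eq_mul] at h
      linarith
    ext i
    by_cases h0 : (i : ℕ) = 0
    · rw [hgmap, if_pos h0]
      have hsum2 : ∑ j ∈ s', proj x j = ∑ i ∈ s, x i := by
        rw [← hsum (fun i => x i)]
        exact Finset.sum_congr rfl fun j _ => hproj x j
      rw [hsum2, hsx]
      have hii : i = i0 := Fin.ext (by simp [hi0, h0])
      rw [hii]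
      field_simp
    · rw [hgmap, if_neg h0, hproj]
      exact congrArg x.ofLp (Fin.ext (by show (i : ℕ) - 1 + 1 = i; omega))
  have hmapsP : Set.MapsTo proj (cube d ∩ {x | ⟪u, x⟫ = 0}) (cube (d - 1)) := by
    intro x hx j
    rw [hproj]
    exact hx.1 _
  have hmapsQ : Set.MapsTo gmap (cube (d - 1)) (cube d ∩ {x | ⟪u, x⟫ = 0}) := by
    intro y hy
    have h1 : ∑ i ∈ s, gmap y i = ∑ j ∈ s', y j := by
      rw [← hsum (fun i => gmap y i)]
      refine Finset.sum_congr rfl fun j hj => ?_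
      rw [hgmap, if_neg (by simp)]
      exact congrArg y.ofLp (Fin.ext (by simp))
    have h2 : gmap y i0 = (m:ℝ)⁻¹ * ∑ j ∈ s', y j := by
      rw [hgmap, if_pos (by simp [hi0])]
    constructor
    · intro i
      by_cases h0 : (i : ℕ) = 0
      · rw [hgmap, if_pos h0]
        have hb : |∑ j ∈ s', y j| ≤ (m:ℝ) := by
          calc |∑ j ∈ s', y j| ≤ ∑ j ∈ s', |y j| := Finset.abs_sum_le_sum_abs _ _
            _ ≤ ∑ _j ∈ s', (1:ℝ) := Finset.sum_le_sum fun j _ => hy j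
            _ = (m:ℝ) := by rw [Finset.sum_const, hcard', nsmul_eq_mul, mul_one]
        have hmi : (0:ℝ) < (m:ℝ)⁻¹ := inv_pos.mpr hmR
        rw [abs_mul, abs_of_pos hmi]
        calc (m:ℝ)⁻¹ * |∑ j ∈ s', y j| ≤ (m:ℝ)⁻¹ * (m:ℝ) :=
              mul_le_mul_of_nonneg_left hb hmi.le
          _ = 1 := inv_mul_cancel₀ hmR.ne'
      · rw [hgmap, if_neg h0]
        exact hy _
    · show ⟪u, gmap y⟫ = 0
      rw [hinner, Finset.sum_sub_distrib, Finset.sum_const, hcard, nsmul_eq_mul, h1, h2]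
      field_simp
      ring
  have hbij : Set.BijOn proj (cube d ∩ {x | ⟪u, x⟫ = 0}) (cube (d - 1)) := by
    refine ⟨hmapsP, ?_, ?_⟩
    · intro x hx x' hx' h
      rw [← hgp x hx, ← hgp x' hx', h]
    · intro y hy
      exact ⟨gmap y, hmapsQ hy, hpg y⟩
  refine ⟨hpart1, hpart2, hlin, hbij, ?_⟩
  -- Part 5
  exact combEquiv_of_clm
    (LinearMap.toContinuousLinearMap (IsLinearMap.mk' proj hlin))
    (LinearMap.toContinuousLinearMap (IsLinearMap.mk' gmap hglin))
    hmapsP hmapsQ hgp (fun y _ => hpg y)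
end
end

section
/- Let H be an affine hyperplane in R^d such that C_d ∩ H is (d-1)-dimensional, and let v be a vertex of the slice C_d ∩ H that lies in the relative interior of an edge e of C_d. Then v is a simple vertex of the slice, i.e., v is contained in exactly d-1 edges of the polytope C_d ∩ H, these being the intersections of H with the d-1 squares of C_d containing e. -/
open scoped RealInnerProductSpace

noncomputable section

variable {d : ℕ}

def sgl (d : ℕ) (i : Fin d) : EuclideanSpace ℝ (Fin d) := EuclideanSpace.single i 1

lemma sgl_apply (i j : Fin d) : sgl d i j = if j = i then 1 else 0 :=
  EuclideanSpace.single_apply i 1 j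

lemma eq_sum_sgl (x : EuclideanSpace ℝ (Fin d)) : x = ∑ i, x i • sgl d i := by
  have := (EuclideanSpace.basisFun (Fin d) ℝ).sum_repr x
  simp only [EuclideanSpace.basisFun_repr, EuclideanSpace.basisFun_apply] at this
  exact this.symm

lemma clm_apply_eq_sum (l : EuclideanSpace ℝ (Fin d) →L[ℝ] ℝ) (x : EuclideanSpace ℝ (Fin d)) :
    l x = ∑ i, x i * l (sgl d i) := by
  conv_lhs => rw [eq_sum_sgl x]
  rw [map_sum]
  simp [smul_eq_mul]

lemma inner_eq_sum (u x : EuclideanSpace ℝ (Fin d)) : ⟪u, x⟫ = ∑ i, u i * x i := by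
  rw [PiLp.inner_apply]; simp [RCLike.inner_apply]; exact Finset.sum_congr rfl (fun i _ => mul_comm _ _)

lemma smul_apply' (r : ℝ) (x : EuclideanSpace ℝ (Fin d)) (i : Fin d) : (r • x) i = r * x i := rfl
lemma add_apply' (x y : EuclideanSpace ℝ (Fin d)) (i : Fin d) : (x + y) i = x i + y i := rfl
lemma sub_apply' (x y : EuclideanSpace ℝ (Fin d)) (i : Fin d) : (x - y) i = x i - y i := rfl

def coordFace (S : Finset (Fin d)) (ε : Fin d → ℝ) : Set (EuclideanSpace ℝ (Fin d)) :=
  {x | (∀ i, |x i| ≤ 1) ∧ ∀ i ∈ S, x i = ε i}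
lemma cube_exposed_char {F : Set (EuclideanSpace ℝ (Fin d))}
    (hF : IsExposed ℝ (cube d) F) (hne : F.Nonempty) :
    ∃ (S : Finset (Fin d)) (ε : Fin d → ℝ), (∀ i, ε i = 1 ∨ ε i = -1) ∧ F = coordFace S ε := by
  obtain ⟨l, hl⟩ := hF hne
  classical
  set a : Fin d → ℝ := fun i => l (sgl d i) with ha
  set S : Finset (Fin d) := Finset.univ.filter (fun i => a i ≠ 0) with hS
  set ε : Fin d → ℝ := fun i => if 0 ≤ a i then 1 else -1 with hε
  refine ⟨S, ε, fun i => by by_cases h : 0 ≤ a i <;> simp [hε, h], ?_⟩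
  have hεabs : ∀ i, a i * ε i = |a i| := by
    intro i
    by_cases h : 0 ≤ a i
    · simp [hε, h, abs_of_nonneg h]
    · simp [hε, h, abs_of_neg (lt_of_not_ge h)]
  have hεone : ∀ i, |ε i| = 1 := by
    intro i; by_cases h : 0 ≤ a i <;> simp [hε, h]
  -- the point ε itself is in the cube and maximizes l
  have hεcube : (WithLp.toLp 2 ε : EuclideanSpace ℝ (Fin d)) ∈ cube d := fun i => le_of_eq (hεone i)
  have hterm : ∀ (y : EuclideanSpace ℝ (Fin d)), y ∈ cube d → ∀ i, y i * a i ≤ |a i| := by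
    intro y hy i
    calc y i * a i ≤ |y i * a i| := le_abs_self _
    _ = |y i| * |a i| := abs_mul _ _
    _ ≤ 1 * |a i| := by
        apply mul_le_mul_of_nonneg_right (hy i) (abs_nonneg _)
    _ = |a i| := one_mul _
  have hly : ∀ (y : EuclideanSpace ℝ (Fin d)), y ∈ cube d → l y ≤ ∑ i, |a i| := by
    intro y hy
    rw [clm_apply_eq_sum]
    exact Finset.sum_le_sum (fun i _ => hterm y hy i)
  have hlε : l (WithLp.toLp 2 ε : EuclideanSpace ℝ (Fin d)) = ∑ i, |a i| := by
    rw [clm_apply_eq_sum]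
    exact Finset.sum_congr rfl (fun i _ => by rw [mul_comm]; exact hεabs i)
  rw [hl]
  ext x
  simp only [Set.mem_setOf_eq, coordFace, cube]
  constructor
  · rintro ⟨hxc, hmax⟩
    refine ⟨hxc, ?_⟩
    have hmx : l x = ∑ i, |a i| := le_antisymm (hly x hxc)
      (by calc ∑ i, |a i| = l (WithLp.toLp 2 ε : EuclideanSpace ℝ (Fin d)) := hlε.symm
          _ ≤ l x := hmax _ hεcube)
    rw [clm_apply_eq_sum] at hmx
    have := (Finset.sum_eq_sum_iff_of_le (fun i _ => hterm x hxc i)).mp hmx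
    intro i hiS
    have hai : a i ≠ 0 := by simpa [hS] using hiS
    have hxi := this i (Finset.mem_univ i)
    -- x i * a i = |a i| = a i * ε i, so x i = ε i
    have : x i * a i = a i * ε i := by rw [hxi, hεabs]
    have : (x i - ε i) * a i = 0 := by ring_nf; linarith [this]
    rcases mul_eq_zero.mp this with h | h
    · linarith [sub_eq_zero.mp h]
    · exact absurd h hai
  · rintro ⟨hxc, hxS⟩
    refine ⟨hxc, fun y hy => ?_⟩
    have hlx : l x = ∑ i, |a i| := by
      rw [clm_apply_eq_sum]
      refine Finset.sum_congr rfl (fun i _ => ?_)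
      by_cases hiS : i ∈ S
      · rw [hxS i hiS, mul_comm]; exact hεabs i
      · have h0 : a i = 0 := by simpa [hS] using hiS
        show x i * a i = |a i|
        rw [h0]; simp
    rw [hlx]
    exact hly y hy
lemma sum_sgl_mem_span {T : Finset (Fin d)} (y : EuclideanSpace ℝ (Fin d))
    (hy : ∀ i ∉ T, y i = 0) :
    y ∈ Submodule.span ℝ (sgl d '' (↑T : Set (Fin d))) := by
  classical
  have h1 : (∑ i ∈ T, y i • sgl d i) = y := by
    conv_rhs => rw [eq_sum_sgl y]
    exact Finset.sum_subset (Finset.subset_univ _)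
      (fun i _ hi => by rw [hy i hi, zero_smul])
  rw [← h1]
  exact Submodule.sum_mem _ (fun i hi => Submodule.smul_mem _ _
    (Submodule.subset_span ⟨i, hi, rfl⟩))

lemma vectorSpan_coordFace {S : Finset (Fin d)} {ε : Fin d → ℝ}
    (hε : ∀ i, ε i = 1 ∨ ε i = -1) :
    vectorSpan ℝ (coordFace S ε) = Submodule.span ℝ (sgl d '' (↑Sᶜ : Set (Fin d))) := by
  classical
  have hεone : ∀ i, |ε i| = 1 := fun i => by rcases hε i with h | h <;> simp [h]
  let p : EuclideanSpace ℝ (Fin d) := WithLp.toLp 2 (fun i => if i ∈ S then ε i else 0)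
  have hpj : ∀ j, p j = if j ∈ S then ε j else 0 := fun _ => rfl
  have hpF : p ∈ coordFace S ε := by
    constructor
    · intro i
      rw [hpj]
      by_cases h : i ∈ S <;> simp [h, hεone i]
    · intro i hi; rw [hpj]; simp [hi]
  apply le_antisymm
  · rw [vectorSpan_def]
    rw [Submodule.span_le]
    rintro z ⟨x, hx, y, hy, rfl⟩
    exact sum_sgl_mem_span _ (fun i hi => by
      have hiS : i ∈ S := by simpa using hi
      show x i - y i = 0
      rw [hx.2 i hiS, hy.2 i hiS, sub_self])
  · rw [Submodule.span_le]
    rintro z ⟨i, hi, rfl⟩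
    have hiS : i ∉ S := by simpa using hi
    have hmem : p + sgl d i ∈ coordFace S ε := by
      constructor
      · intro j
        show |p j + sgl d i j| ≤ 1
        rw [sgl_apply, hpj]
        by_cases hj : j ∈ S
        · have : j ≠ i := fun h => hiS (h ▸ hj)
          simp [hj, this, hεone j]
        · by_cases hji : j = i <;> simp [hj, hji, hiS]
      · intro j hj
        show p j + sgl d i j = ε j
        have : j ≠ i := fun h => hiS (h ▸ hj)
        rw [hpj, sgl_apply]
        simp [hj, this]
    have := vsub_mem_vectorSpan ℝ hmem hpF
    simpa using this

lemma adim_coordFace {S : Finset (Fin d)} {ε : Fin d → ℝ}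
    (hε : ∀ i, ε i = 1 ∨ ε i = -1) :
    adim (coordFace S ε) = d - S.card := by
  classical
  rw [adim, direction_affineSpan, vectorSpan_coordFace hε]
  have hb : LinearIndependent ℝ (fun i : {x // x ∈ Sᶜ} => sgl d (i : Fin d)) := by
    have h1 := (EuclideanSpace.basisFun (Fin d) ℝ).toBasis.linearIndependent
    have h2 := h1.comp (fun i : {x // x ∈ Sᶜ} => (i : Fin d)) Subtype.val_injective
    convert h2 using 1
    funext i
    simp [sgl, EuclideanSpace.basisFun_apply]
    all_goals rfl
  have hrange : Set.range (fun i : {x // x ∈ Sᶜ} => sgl d (i : Fin d))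
      = sgl d '' (↑Sᶜ : Set (Fin d)) := by
    ext z
    constructor
    · rintro ⟨⟨i, hi⟩, rfl⟩; exact ⟨i, hi, rfl⟩
    · rintro ⟨i, hi, rfl⟩; exact ⟨⟨i, hi⟩, rfl⟩
  rw [← hrange, finrank_span_eq_card hb, Fintype.card_coe, Finset.card_compl,
    Fintype.card_fin]
lemma abs_lt_one_of_relint {S : Finset (Fin d)} {ε : Fin d → ℝ}
    {k : Fin d}
    (hsgl : sgl d k ∈ vectorSpan ℝ (coordFace S ε))
    {v : EuclideanSpace ℝ (Fin d)} (hrel : v ∈ intrinsicInterior ℝ (coordFace S ε)) :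
    |v k| < 1 := by
  classical
  obtain ⟨y, hy, hyv⟩ := hrel
  have hve : v ∈ coordFace S ε := hyv ▸ (interior_subset hy : _)
  have hφmem : ∀ t : ℝ, t • sgl d k + v ∈ affineSpan ℝ (coordFace S ε) := by
    intro t
    have h1 : t • sgl d k ∈ (affineSpan ℝ (coordFace S ε)).direction := by
      rw [direction_affineSpan]
      exact Submodule.smul_mem _ _ hsgl
    have := AffineSubspace.vadd_mem_of_mem_direction h1 (subset_affineSpan ℝ _ hve)
    simpa using this
  set ψ : ℝ → (affineSpan ℝ (coordFace S ε) : Set (EuclideanSpace ℝ (Fin d))) :=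
    fun t => ⟨t • sgl d k + v, hφmem t⟩ with hψ
  have hψcont : Continuous ψ := by
    apply Continuous.subtype_mk
    exact (continuous_id.smul continuous_const).add continuous_const
  have hψ0 : ψ 0 = y := by
    apply Subtype.ext
    simp [hψ, hyv]
  have hUopen : IsOpen (ψ ⁻¹' interior (Subtype.val ⁻¹' (coordFace S ε))) :=
    isOpen_interior.preimage hψcont
  have h0mem : (0 : ℝ) ∈ ψ ⁻¹' interior (Subtype.val ⁻¹' (coordFace S ε)) := by
    simp only [Set.mem_preimage, hψ0]; exact hy
  obtain ⟨δ, hδ, hball⟩ := Metric.mem_nhds_iff.mp (hUopen.mem_nhds h0mem)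
  have hmem : ∀ t : ℝ, |t| < δ → t • sgl d k + v ∈ coordFace S ε := by
    intro t ht
    have : t ∈ Metric.ball (0:ℝ) δ := by simpa [Real.dist_eq] using ht
    have h2 : ψ t ∈ interior (Subtype.val ⁻¹' coordFace S ε) := hball this
    have h3 : ψ t ∈ Subtype.val ⁻¹' coordFace S ε := interior_subset h2
    exact h3
  have ht1 := hmem (δ/2) (by rw [abs_of_pos (by linarith)]; linarith)
  have ht2 := hmem (-(δ/2)) (by rw [abs_of_neg (by linarith)]; linarith)
  have e1 : |v k + δ/2| ≤ 1 := by
    have := ht1.1 k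
    simpa [sgl_apply, add_comm] using this
  have e2 : |v k - δ/2| ≤ 1 := by
    have := ht2.1 k
    have h' : -(δ/2) + v k = v k - δ/2 := by ring
    rw [add_apply', smul_apply', sgl_apply, if_pos rfl, mul_one, h'] at this; exact this
  rw [abs_le] at e1 e2
  rw [abs_lt]
  constructor <;> [linarith [e1.1]; linarith [e2.2]]

def sgnVec (S : Finset (Fin d)) (ε : Fin d → ℝ) : EuclideanSpace ℝ (Fin d) :=
  WithLp.toLp 2 (fun i => if i ∈ S then ε i else 0)

lemma inner_sgnVec (S : Finset (Fin d)) (ε : Fin d → ℝ) (y : EuclideanSpace ℝ (Fin d)) :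
    ⟪sgnVec S ε, y⟫ = ∑ i ∈ S, ε i * y i := by
  rw [inner_eq_sum]
  rw [← Finset.sum_subset (Finset.subset_univ S)
    (fun i _ hi => by show sgnVec S ε i * y i = 0; simp [sgnVec, hi])]
  exact Finset.sum_congr rfl (fun i hi => by show sgnVec S ε i * y i = _; simp [sgnVec, hi])

lemma sum_sgn_le {S : Finset (Fin d)} {ε : Fin d → ℝ} (hε : ∀ i, ε i = 1 ∨ ε i = -1)
    {y : EuclideanSpace ℝ (Fin d)} (hy : y ∈ cube d) :
    ∑ i ∈ S, ε i * y i ≤ (S.card : ℝ) := by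
  calc ∑ i ∈ S, ε i * y i ≤ ∑ i ∈ S, (1:ℝ) := by
        refine Finset.sum_le_sum (fun i _ => ?_)
        calc ε i * y i ≤ |ε i * y i| := le_abs_self _
        _ = |ε i| * |y i| := abs_mul _ _
        _ ≤ 1 * 1 := by
            rcases hε i with h | h <;>
            exact mul_le_mul (by simp [h]) (hy i) (abs_nonneg _) (by norm_num)
        _ = 1 := one_mul _
  _ = S.card := by simp

lemma sum_sgn_eq_iff {S : Finset (Fin d)} {ε : Fin d → ℝ} (hε : ∀ i, ε i = 1 ∨ ε i = -1)
    {y : EuclideanSpace ℝ (Fin d)} (hy : y ∈ cube d) :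
    ∑ i ∈ S, ε i * y i = (S.card : ℝ) ↔ ∀ i ∈ S, y i = ε i := by
  have hterm : ∀ i ∈ S, ε i * y i ≤ (1:ℝ) := by
    intro i _
    calc ε i * y i ≤ |ε i * y i| := le_abs_self _
    _ = |ε i| * |y i| := abs_mul _ _
    _ ≤ 1 * 1 := by
        rcases hε i with h | h <;>
        exact mul_le_mul (by simp [h]) (hy i) (abs_nonneg _) (by norm_num)
    _ = 1 := one_mul _
  constructor
  · intro h
    have hsum : ∑ i ∈ S, ε i * y i = ∑ i ∈ S, (1:ℝ) := by rw [h]; simp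
    have := (Finset.sum_eq_sum_iff_of_le hterm).mp hsum
    intro i hi
    have h1 := this i hi
    rcases hε i with h2 | h2 <;> rw [h2] at h1 ⊢ <;> linarith
  · intro h
    calc ∑ i ∈ S, ε i * y i = ∑ i ∈ S, (1:ℝ) := by
          refine Finset.sum_congr rfl (fun i hi => ?_)
          rw [h i hi]
          rcases hε i with h2 | h2 <;> rw [h2] <;> ring
    _ = S.card := by simp

/-- Exposing a coordinate subface of any subset `A` of the cube containing a point `v`
attaining the coordinate values. -/
lemma exposed_sub {S : Finset (Fin d)} {ε : Fin d → ℝ} (hε : ∀ i, ε i = 1 ∨ ε i = -1)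
    {A : Set (EuclideanSpace ℝ (Fin d))} (hA : A ⊆ cube d)
    {v : EuclideanSpace ℝ (Fin d)} (hvA : v ∈ A) (hvF : ∀ i ∈ S, v i = ε i) :
    IsExposed ℝ A {x | x ∈ A ∧ ∀ i ∈ S, x i = ε i} := by
  intro _
  refine ⟨innerSL ℝ (sgnVec S ε), ?_⟩
  have key : ∀ y ∈ A, innerSL ℝ (sgnVec S ε) y ≤ (S.card : ℝ) := by
    intro y hy
    rw [innerSL_apply_apply, inner_sgnVec]
    exact sum_sgn_le hε (hA hy)
  have hveq : innerSL ℝ (sgnVec S ε) v = (S.card : ℝ) := by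
    rw [innerSL_apply_apply, inner_sgnVec]
    exact (sum_sgn_eq_iff hε (hA hvA)).mpr hvF
  ext x
  simp only [Set.mem_setOf_eq]
  constructor
  · rintro ⟨hxA, hxS⟩
    refine ⟨hxA, fun y hy => ?_⟩
    have : innerSL ℝ (sgnVec S ε) x = (S.card : ℝ) := by
      rw [innerSL_apply_apply, inner_sgnVec]
      exact (sum_sgn_eq_iff hε (hA hxA)).mpr hxS
    rw [this]
    exact key y hy
  · rintro ⟨hxA, hmax⟩
    refine ⟨hxA, ?_⟩
    have h1 : innerSL ℝ (sgnVec S ε) x = (S.card : ℝ) :=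
      le_antisymm (key x hxA) (hveq ▸ hmax v hvA)
    rw [innerSL_apply_apply, inner_sgnVec] at h1
    exact (sum_sgn_eq_iff hε (hA hxA)).mp h1

lemma exposed_coordFace {S : Finset (Fin d)} {ε : Fin d → ℝ} (hε : ∀ i, ε i = 1 ∨ ε i = -1) :
    IsExposed ℝ (cube d) (coordFace S ε) := by
  have hεc : (WithLp.toLp 2 ε : EuclideanSpace ℝ (Fin d)) ∈ cube d := by
    intro i; rcases hε i with h | h <;> simp [h]
  have h := exposed_sub (S := S) hε (le_refl (cube d)) hεc (fun i _ => rfl)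
  have heq : {x | x ∈ cube d ∧ ∀ i ∈ S, x i = ε i} = coordFace S ε := rfl
  rwa [heq] at h

lemma adim_line {g : Set (EuclideanSpace ℝ (Fin d))} {v z : EuclideanSpace ℝ (Fin d)}
    (hz : z ≠ 0) (hvg : v ∈ g)
    (hsub : ∀ x ∈ g, x - v ∈ Submodule.span ℝ {z})
    (h2 : ∃ x ∈ g, x ≠ v) : adim g = 1 := by
  have hvs : vectorSpan ℝ g = Submodule.span ℝ {z} := by
    apply le_antisymm
    · rw [vectorSpan_def, Submodule.span_le]
      rintro w ⟨x, hx, y, hy, rfl⟩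
      show x -ᵥ y ∈ _
      rw [vsub_eq_sub]
      have h3 : x - y = (x - v) - (y - v) := by abel
      rw [h3]
      exact Submodule.sub_mem _ (hsub x hx) (hsub y hy)
    · obtain ⟨x, hxg, hxv⟩ := h2
      obtain ⟨r, hr⟩ := Submodule.mem_span_singleton.mp (hsub x hxg)
      have hr0 : r ≠ 0 := by
        rintro rfl
        rw [zero_smul] at hr
        exact hxv (by rw [← sub_eq_zero]; exact hr.symm)
      have hzv : z ∈ vectorSpan ℝ g := by
        have hx : x -ᵥ v ∈ vectorSpan ℝ g := vsub_mem_vectorSpan ℝ hxg hvg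
        have h4 : z = r⁻¹ • (x - v) := by
          rw [← hr, smul_smul, inv_mul_cancel₀ hr0, one_smul]
        rw [h4]
        exact Submodule.smul_mem _ _ hx
      exact (Submodule.span_singleton_le_iff_mem _ _).mpr hzv
  rw [adim, direction_affineSpan, hvs, finrank_span_singleton hz]

lemma sum_eq_pair {j k : Fin d} (hjk : j ≠ k) (f : Fin d → ℝ)
    (hf : ∀ i, i ≠ j → i ≠ k → f i = 0) : ∑ i, f i = f j + f k := by
  classical
  rw [← Finset.sum_subset (Finset.subset_univ ({j, k} : Finset (Fin d)))
    (fun i _ hi => hf i (fun h => hi (by simp [h])) (fun h => hi (by simp [h])))]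
  exact Finset.sum_pair hjk

def zvec (u v : EuclideanSpace ℝ (Fin d)) (k j : Fin d) : EuclideanSpace ℝ (Fin d) :=
  (-(v j)) • (sgl d j - (u j / u k) • sgl d k)

lemma zvec_apply (u v : EuclideanSpace ℝ (Fin d)) (k j i : Fin d) :
    zvec u v k j i = (-(v j)) * ((if i = j then (1:ℝ) else 0) - (u j / u k) * (if i = k then 1 else 0)) := by
  show (-(v j)) * ((sgl d j - (u j / u k) • sgl d k) i) = _
  show (-(v j)) * (sgl d j i - (u j / u k) * sgl d k i) = _
  rw [sgl_apply, sgl_apply]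

lemma zvec_apply_j {j k : Fin d} (hjk : j ≠ k) (u v : EuclideanSpace ℝ (Fin d)) :
    zvec u v k j j = -(v j) := by
  rw [zvec_apply]; simp [hjk]

lemma zvec_apply_k {j k : Fin d} (hjk : j ≠ k) (u v : EuclideanSpace ℝ (Fin d)) :
    zvec u v k j k = v j * (u j / u k) := by
  rw [zvec_apply]; simp [Ne.symm hjk]

lemma zvec_apply_other {j k i : Fin d} (hij : i ≠ j) (hik : i ≠ k) (u v : EuclideanSpace ℝ (Fin d)) :
    zvec u v k j i = 0 := by
  rw [zvec_apply]; simp [hij, hik]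

lemma inner_zvec {u : EuclideanSpace ℝ (Fin d)} {j k : Fin d} (huk : u k ≠ 0) (hjk : j ≠ k)
    (v : EuclideanSpace ℝ (Fin d)) : ⟪u, zvec u v k j⟫ = 0 := by
  rw [inner_eq_sum, sum_eq_pair hjk (fun i => u i * zvec u v k j i)
    (fun i hij hik => by show u i * zvec u v k j i = 0; rw [zvec_apply_other hij hik, mul_zero])]
  rw [zvec_apply_j hjk, zvec_apply_k hjk]
  field_simp
  ring

lemma zvec_ne {j k : Fin d} (hjk : j ≠ k) {u v : EuclideanSpace ℝ (Fin d)}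
    (hvj : v j = 1 ∨ v j = -1) : zvec u v k j ≠ 0 := by
  intro h
  have : zvec u v k j j = (0 : EuclideanSpace ℝ (Fin d)) j := by rw [h]
  rw [zvec_apply_j hjk] at this
  rcases hvj with h1 | h1 <;> rw [h1] at this <;> norm_num at this

lemma mem_span_zvec {u v : EuclideanSpace ℝ (Fin d)} {j k : Fin d} (huk : u k ≠ 0)
    (hjk : j ≠ k) (hvj : v j = 1 ∨ v j = -1)
    {y : EuclideanSpace ℝ (Fin d)} (hy0 : ∀ i, i ≠ j → i ≠ k → y i = 0)
    (hyu : ⟪u, y⟫ = 0) : y ∈ Submodule.span ℝ {zvec u v k j} := by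
  rw [Submodule.mem_span_singleton]
  have hvj0 : v j ≠ 0 := by rcases hvj with h | h <;> rw [h] <;> norm_num
  refine ⟨y j / (-(v j)), ?_⟩
  have hyk : u j * y j + u k * y k = 0 := by
    rw [inner_eq_sum, sum_eq_pair hjk (fun i => u i * y i)
      (fun i hij hik => by show u i * y i = 0; rw [hy0 i hij hik, mul_zero])] at hyu
    exact hyu
  ext i
  show (y j / (-(v j))) * zvec u v k j i = y i
  by_cases hij : i = j
  · subst hij
    rw [zvec_apply_j hjk]
    field_simp
  · by_cases hik : i = k
    · rw [hik, zvec_apply_k hjk]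
      have hyk2 : y k = -(u j * y j) / u k := by field_simp; linarith
      rw [hyk2]
      field_simp
    · rw [zvec_apply_other hij hik, hy0 i hij hik, mul_zero]

lemma move_mem {u v : EuclideanSpace ℝ (Fin d)} {c : ℝ} {j k : Fin d} (huk : u k ≠ 0)
    (hjk : j ≠ k) (hvcube : v ∈ cube d) (hvk : |v k| < 1) (hvc : ⟪u, v⟫ = c) :
    ∃ δ : ℝ, 0 < δ ∧ ∀ t : ℝ, 0 ≤ t → t ≤ δ →
      (v + t • zvec u v k j ∈ cube d ∧ ⟪u, v + t • zvec u v k j⟫ = c ∧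
       ∀ i, i ≠ j → i ≠ k → (v + t • zvec u v k j) i = v i) := by
  set z := zvec u v k j with hz
  have hδpos : 0 < (1 - |v k|) / (1 + |z k|) :=
    div_pos (by linarith) (by positivity)
  refine ⟨(1 - |v k|) / (1 + |z k|), hδpos, fun t ht0 htδ => ?_⟩
  have happ : ∀ i, (v + t • z) i = v i + t * z i := fun i => rfl
  have hδ1 : (1 - |v k|) / (1 + |z k|) ≤ 1 := by
    rw [div_le_one (by positivity)]
    have := abs_nonneg (v k)
    have := abs_nonneg (z k)
    linarith
  refine ⟨?_, ?_, ?_⟩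
  · intro i
    rw [happ]
    by_cases hij : i = j
    · rw [hij]
      rw [hz, zvec_apply_j hjk]
      have h1 : v j + t * -(v j) = v j * (1 - t) := by ring
      rw [h1, abs_mul]
      calc |v j| * |1 - t| ≤ 1 * 1 := by
            apply mul_le_mul (hvcube j) _ (abs_nonneg _) zero_le_one
            rw [abs_le]; constructor <;> [linarith; linarith]
      _ = 1 := one_mul 1
    · by_cases hik : i = k
      · rw [hik]
        calc |v k + t * z k| ≤ |v k| + |t * z k| := abs_add_le _ _
        _ = |v k| + t * |z k| := by rw [abs_mul, abs_of_nonneg ht0]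
        _ ≤ |v k| + ((1 - |v k|) / (1 + |z k|)) * (1 + |z k|) := by
            have h2 : t * |z k| ≤ ((1 - |v k|) / (1 + |z k|)) * (1 + |z k|) := by
              apply mul_le_mul htδ (by linarith [abs_nonneg (z k)]) (abs_nonneg _) (le_of_lt hδpos)
            linarith
        _ = 1 := by field_simp; ring
      · rw [hz, zvec_apply_other hij hik, mul_zero, add_zero]
        exact hvcube i
  · rw [inner_add_right, real_inner_smul_right, hvc, hz, inner_zvec huk hjk, mul_zero, add_zero]
  · intro i hij hik
    rw [happ, hz, zvec_apply_other hij hik, mul_zero, add_zero]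

lemma z_decomp {u v z : EuclideanSpace ℝ (Fin d)} {k : Fin d} (huk : u k ≠ 0)
    (hv1 : ∀ i, i ≠ k → v i = 1 ∨ v i = -1) (hz : ⟪u, z⟫ = 0) :
    z = ∑ i ∈ Finset.univ.erase k, (-(v i) * z i) • zvec u v k i := by
  classical
  have hvsq : ∀ i, i ≠ k → v i * v i = 1 := by
    intro i hi; rcases hv1 i hi with h | h <;> rw [h] <;> norm_num
  ext m
  rw [show (∑ i ∈ Finset.univ.erase k, (-(v i) * z i) • zvec u v k i) m
      = ∑ i ∈ Finset.univ.erase k, (-(v i) * z i) * zvec u v k i m from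
    by rw [WithLp.ofLp_sum]; exact Finset.sum_apply m _ _]
  by_cases hmk : m = k
  · subst hmk
    have hsum : ∀ i ∈ Finset.univ.erase m, (-(v i) * z i) * zvec u v m i m
        = -(u i * z i) / u m := by
      intro i hi
      have him : i ≠ m := Finset.ne_of_mem_erase hi
      rw [zvec_apply_k him]
      rw [show -v i * z i * (v i * (u i / u m)) = -((v i * v i) * (z i * u i)) / u m from by
        ring, hvsq i him]
      ring
    rw [Finset.sum_congr rfl hsum]
    rw [← Finset.sum_div]
    have hinner : u m * z m + ∑ i ∈ Finset.univ.erase m, u i * z i = 0 := by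
      have h5 : u m * z m + ∑ i ∈ Finset.univ.erase m, u i * z i = ∑ i, u i * z i :=
        Finset.add_sum_erase Finset.univ (fun i => u i * z i) (Finset.mem_univ m)
      rw [inner_eq_sum] at hz
      rw [h5, hz]
    have : ∑ i ∈ Finset.univ.erase m, -(u i * z i) = u m * z m := by
      rw [Finset.sum_neg_distrib]
      linarith
    rw [this]
    field_simp
  · rw [Finset.sum_eq_single m
      (fun i hi him => by rw [zvec_apply_other (Ne.symm him) hmk, mul_zero])
      (fun hm => absurd (Finset.mem_erase.mpr ⟨hmk, Finset.mem_univ m⟩) hm)]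
    rw [zvec_apply_j hmk]
    rw [show -v m * z m * -v m = (v m * v m) * z m from by ring, hvsq m hmk, one_mul]

lemma inner_sgl (u : EuclideanSpace ℝ (Fin d)) (k : Fin d) : ⟪u, sgl d k⟫ = u k := by
  rw [inner_eq_sum]
  rw [Finset.sum_eq_single k (fun i _ hik => by
      show u i * sgl d k i = 0
      rw [sgl_apply]; simp [hik])
    (fun h => absurd (Finset.mem_univ k) h)]
  rw [sgl_apply]; simp

lemma coordFace_congr {S : Finset (Fin d)} {ε ε' : Fin d → ℝ} (h : ∀ i ∈ S, ε i = ε' i) :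
    coordFace S ε = coordFace S ε' := by
  ext x
  exact ⟨fun ⟨h1, h2⟩ => ⟨h1, fun i hi => (h2 i hi).trans (h i hi)⟩,
    fun ⟨h1, h2⟩ => ⟨h1, fun i hi => (h2 i hi).trans (h i hi).symm⟩⟩

lemma adim_singleton (v : EuclideanSpace ℝ (Fin d)) : adim ({v} : Set (EuclideanSpace ℝ (Fin d))) = 0 := by
  rw [adim, direction_affineSpan, vectorSpan_singleton, finrank_bot]
/-- Let `H = {x | ⟨u,x⟩ = c}` be an affine hyperplane such that the slice `C_d ∩ H` is
`(d-1)`-dimensional, and let `v` be a vertex (extreme point) of `C_d ∩ H` lying in the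
relative interior of an edge `e` of `C_d`. Then the edges of the slice `C_d ∩ H` containing
`v` are exactly the intersections of `H` with the squares of `C_d` containing `e`, and there
are exactly `d - 1` of them; in particular `v` is a simple vertex of the slice. -/
theorem edge_vertex_of_slice_is_simple (d : ℕ)
    (u : EuclideanSpace ℝ (Fin d)) (c : ℝ) (hu : u ≠ 0)
    (hdim : adim (cube d ∩ {x | ⟪u, x⟫ = c}) = d - 1)
    (e : Set (EuclideanSpace ℝ (Fin d)))
    (he : IsExposed ℝ (cube d) e) (hedim : adim e = 1)
    (v : EuclideanSpace ℝ (Fin d))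
    (hv : v ∈ Set.extremePoints ℝ (cube d ∩ {x | ⟪u, x⟫ = c}))
    (hrel : v ∈ intrinsicInterior ℝ e) :
    {f : Set (EuclideanSpace ℝ (Fin d)) |
        IsExposed ℝ (cube d ∩ {x | ⟪u, x⟫ = c}) f ∧ adim f = 1 ∧ v ∈ f}
      = (fun s => s ∩ {x | ⟪u, x⟫ = c}) ''
          {s : Set (EuclideanSpace ℝ (Fin d)) | IsExposed ℝ (cube d) s ∧ adim s = 2 ∧ e ⊆ s} ∧
    {f : Set (EuclideanSpace ℝ (Fin d)) |
        IsExposed ℝ (cube d ∩ {x | ⟪u, x⟫ = c}) f ∧ adim f = 1 ∧ v ∈ f}.ncard = d - 1 := by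
  classical
  have hve : v ∈ e := intrinsicInterior_subset hrel
  obtain ⟨S, ε, hε, rfl⟩ := cube_exposed_char he ⟨v, hve⟩
  set P : Set (EuclideanSpace ℝ (Fin d)) := cube d ∩ {x | ⟪u, x⟫ = c} with hPdef
  -- basic card facts
  have hcardS : S.card = d - 1 ∧ 1 ≤ d := by
    have h1 := adim_coordFace (S := S) hε
    rw [hedim] at h1
    have h2 : S.card ≤ d := by
      have := Finset.card_le_univ S
      simpa using this
    omega
  have hSc : Sᶜ.card = 1 := by
    rw [Finset.card_compl, Fintype.card_fin]
    omega
  obtain ⟨k, hk⟩ := Finset.card_eq_one.mp hSc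
  have hmemS : ∀ i : Fin d, i ∈ S ↔ i ≠ k := by
    intro i
    constructor
    · intro hi hik
      have : i ∈ Sᶜ := by rw [hk, hik]; exact Finset.mem_singleton_self k
      exact (Finset.mem_compl.mp this) hi
    · intro hik
      by_contra hi
      have : i ∈ Sᶜ := Finset.mem_compl.mpr hi
      rw [hk] at this
      exact hik (Finset.mem_singleton.mp this)
  have hknS : k ∉ S := fun h => (hmemS k).mp h rfl
  -- v facts
  have hvcube : v ∈ cube d := hve.1
  have hvS : ∀ i ∈ S, v i = ε i := hve.2
  have hv1 : ∀ i, i ≠ k → (v i = 1 ∨ v i = -1) := fun i hi => by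
    rw [hvS i ((hmemS i).mpr hi)]; exact hε i
  have hvk : |v k| < 1 := by
    refine abs_lt_one_of_relint (S := S) (ε := ε) (k := k) ?_ hrel
    rw [vectorSpan_coordFace hε]
    exact Submodule.subset_span ⟨k, by simp [hk], rfl⟩
  have hvP : v ∈ P := hv.1
  have hvc : ⟪u, v⟫ = c := hvP.2
  have hPsub : P ⊆ cube d := Set.inter_subset_left
  -- u k ≠ 0
  have huk : u k ≠ 0 := by
    intro h0
    set t : ℝ := 1 - |v k| with htdef
    have htpos : 0 < t := by rw [htdef]; linarith
    have hns : ∀ s : ℝ, |s| ≤ t → v + s • sgl d k ∈ P := by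
      intro s hs
      constructor
      · intro i
        show |v i + s * sgl d k i| ≤ 1
        rw [sgl_apply]
        by_cases hik : i = k
        · rw [hik, if_pos rfl, mul_one]
          calc |v k + s| ≤ |v k| + |s| := abs_add_le _ _
          _ ≤ |v k| + t := by linarith
          _ = 1 := by rw [htdef]; ring
        · simp only [if_neg hik, mul_zero, add_zero]
          exact hvcube i
      · show ⟪u, v + s • sgl d k⟫ = c
        rw [inner_add_right, real_inner_smul_right, inner_sgl, h0, mul_zero, add_zero, hvc]
    have ha := hns (-t) (by rw [abs_neg, abs_of_pos htpos])
    have hb := hns t (by rw [abs_of_pos htpos])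
    have hseg : v ∈ openSegment ℝ (v + (-t) • sgl d k) (v + t • sgl d k) := by
      refine ⟨1/2, 1/2, by norm_num, by norm_num, by norm_num, ?_⟩
      module
    have := hv.2 ha hb hseg
    have h2 := congrArg (fun x : EuclideanSpace ℝ (Fin d) => x k) this
    have h3 : v k + (-t) * sgl d k k = v k := h2
    rw [sgl_apply, if_pos rfl, mul_one] at h3
    linarith
  -- canonical sign vector
  set εv : Fin d → ℝ := fun i => if i = k then 1 else v i with hεvdef
  have hεv : ∀ i, εv i = 1 ∨ εv i = -1 := by
    intro i
    by_cases hik : i = k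
    · left; simp [hεvdef, hik]
    · rw [hεvdef]; simp only [if_neg hik]; exact hv1 i hik
  have hεvv : ∀ i, i ≠ k → εv i = v i := fun i hi => by rw [hεvdef]; simp [hi]
  have hεεv : ∀ i ∈ S, ε i = εv i := fun i hi => by
    rw [← hvS i hi, hεvv i ((hmemS i).mp hi)]
  -- squares through e and slice edges
  set T : Fin d → Set (EuclideanSpace ℝ (Fin d)) := fun j => coordFace (S.erase j) εv with hTdef
  set g : Fin d → Set (EuclideanSpace ℝ (Fin d)) := fun j => T j ∩ {x | ⟪u, x⟫ = c} with hgdef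
  have hvT : ∀ j, j ≠ k → v ∈ T j := by
    intro j _
    refine ⟨hvcube, fun i hi => ?_⟩
    exact (hεvv i ((hmemS i).mp (Finset.mem_of_mem_erase hi))).symm
  have hvg : ∀ j, j ≠ k → v ∈ g j := fun j hjk => ⟨hvT j hjk, hvc⟩
  have hgP : ∀ j, g j ⊆ P := fun j x hx => ⟨hx.1.1, hx.2⟩
  have hgexp : ∀ j, j ≠ k → IsExposed ℝ P (g j) := by
    intro j _
    have h1 := exposed_sub (S := S.erase j) hεv hPsub hvP
      (fun i hi => (hεvv i ((hmemS i).mp (Finset.mem_of_mem_erase hi))).symm)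
    have h2 : {x | x ∈ P ∧ ∀ i ∈ S.erase j, x i = εv i} = g j := by
      ext x
      constructor
      · rintro ⟨⟨hxc, hxH⟩, hxS⟩; exact ⟨⟨hxc, hxS⟩, hxH⟩
      · rintro ⟨⟨hxc, hxS⟩, hxH⟩; exact ⟨⟨hxc, hxH⟩, hxS⟩
    rwa [h2] at h1
  have hmove2 : ∀ j, j ≠ k →
      ∃ δ : ℝ, 0 < δ ∧ v + δ • zvec u v k j ∈ g j ∧ v + δ • zvec u v k j ≠ v := by
    intro j hjk
    obtain ⟨δ, hδ, hm⟩ := move_mem (j := j) (c := c) huk hjk hvcube hvk hvc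
    obtain ⟨hc1, hc2, hc3⟩ := hm δ (le_of_lt hδ) (le_refl δ)
    refine ⟨δ, hδ, ⟨⟨hc1, fun i hi => ?_⟩, hc2⟩, ?_⟩
    · have hij : i ≠ j := Finset.ne_of_mem_erase hi
      have hik : i ≠ k := (hmemS i).mp (Finset.mem_of_mem_erase hi)
      rw [hc3 i hij hik, ← hεvv i hik]
    · intro hq
      have h3 : v j + δ * zvec u v k j j = v j := congrArg (fun x : EuclideanSpace ℝ (Fin d) => x j) hq
      rw [zvec_apply_j hjk] at h3
      have hvj0 : v j ≠ 0 := by rcases hv1 j hjk with h | h <;> rw [h] <;> norm_num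
      have h4 : δ * v j = 0 := by linarith
      rcases mul_eq_zero.mp h4 with h | h
      · exact absurd h (ne_of_gt hδ)
      · exact hvj0 h
  have hgspan : ∀ j, j ≠ k → ∀ x ∈ g j, x - v ∈ Submodule.span ℝ {zvec u v k j} := by
    intro j hjk x hx
    refine mem_span_zvec huk hjk (hv1 j hjk) (fun i hij hik => ?_) ?_
    · show x i - v i = 0
      have hi : i ∈ S.erase j := Finset.mem_erase.mpr ⟨hij, (hmemS i).mpr hik⟩
      rw [hx.1.2 i hi, hεvv i hik, sub_self]
    · rw [inner_sub_right, hx.2, hvc, sub_self]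
  have hgdim : ∀ j, j ≠ k → adim (g j) = 1 := by
    intro j hjk
    obtain ⟨δ, hδ, hqg, hqv⟩ := hmove2 j hjk
    exact adim_line (zvec_ne hjk (hv1 j hjk)) (hvg j hjk) (hgspan j hjk) ⟨_, hqg, hqv⟩
  have hginj : ∀ j₁, j₁ ≠ k → ∀ j₂, j₂ ≠ k → g j₁ = g j₂ → j₁ = j₂ := by
    intro j₁ hj₁ j₂ hj₂ hgg
    by_contra hne
    obtain ⟨δ, hδ, hqg, hqv⟩ := hmove2 j₁ hj₁
    rw [hgg] at hqg
    have h5 := hqg.1.2 j₁ (Finset.mem_erase.mpr ⟨hne, (hmemS j₁).mpr hj₁⟩)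
    have h6 : v j₁ + δ * zvec u v k j₁ j₁ = εv j₁ := h5
    rw [zvec_apply_j hj₁, hεvv j₁ hj₁] at h6
    have hvj0 : v j₁ ≠ 0 := by rcases hv1 j₁ hj₁ with h | h <;> rw [h] <;> norm_num
    have h7 : δ * v j₁ = 0 := by linarith
    rcases mul_eq_zero.mp h7 with h | h
    · exact absurd h (ne_of_gt hδ)
    · exact hvj0 h
  -- squares through e
  have hsquares : {s : Set (EuclideanSpace ℝ (Fin d)) |
      IsExposed ℝ (cube d) s ∧ adim s = 2 ∧ coordFace S ε ⊆ s} = T '' {j | j ≠ k} := by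
    apply Set.Subset.antisymm
    · rintro s ⟨hsexp, hsdim, hes⟩
      obtain ⟨S', ε', hε', rfl⟩ := cube_exposed_char hsexp ⟨v, hes hve⟩
      have h1 := adim_coordFace (S := S') hε'
      rw [hsdim] at h1
      have hS'le : S'.card ≤ d := by
        have := Finset.card_le_univ S'
        simpa using this
      have hS'card : S'.card = d - 2 := by omega
      have hknS' : k ∉ S' := by
        intro hkmem
        have h2 := (hes hve).2 k hkmem
        rcases hε' k with h | h <;> rw [h] at h2 <;> rw [h2] at hvk <;> norm_num at hvk
      have hsub : S' ⊆ S := fun i hi => (hmemS i).mpr (fun hik => hknS' (hik ▸ hi))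
      have hsd : (S \ S').card = 1 := by
        rw [Finset.card_sdiff_of_subset hsub]
        omega
      obtain ⟨j, hj⟩ := Finset.card_eq_one.mp hsd
      have hjmem : j ∈ S \ S' := by rw [hj]; exact Finset.mem_singleton_self j
      have hjS : j ∈ S := (Finset.mem_sdiff.mp hjmem).1
      have hjnS' : j ∉ S' := (Finset.mem_sdiff.mp hjmem).2
      have hjk : j ≠ k := (hmemS j).mp hjS
      have hS'eq : S' = S.erase j := by
        apply Finset.eq_of_subset_of_card_le
        · intro i hi
          exact Finset.mem_erase.mpr ⟨fun hij => hjnS' (hij ▸ hi), hsub hi⟩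
        · rw [Finset.card_erase_of_mem hjS]
          omega
      refine ⟨j, hjk, ?_⟩
      show coordFace (S.erase j) εv = coordFace S' ε'
      rw [← hS'eq]
      apply coordFace_congr
      intro i hi
      have hik : i ≠ k := fun h => hknS' (h ▸ hi)
      rw [hεvv i hik, (hes hve).2 i hi]
    · rintro s ⟨j, hjk, rfl⟩
      have hjk' : j ≠ k := hjk
      have hjS : j ∈ S := (hmemS j).mpr hjk'
      refine ⟨exposed_coordFace hεv, ?_, ?_⟩
      · show adim (coordFace (S.erase j) εv) = 2
        rw [adim_coordFace hεv, Finset.card_erase_of_mem hjS]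
        have hd2 : 2 ≤ d := by
          have hp : ({j, k} : Finset (Fin d)).card = 2 := Finset.card_pair hjk'
          have hle : ({j, k} : Finset (Fin d)).card ≤ d := by
            have := Finset.card_le_univ ({j, k} : Finset (Fin d))
            simpa using this
          omega
        omega
      · intro x hx
        exact ⟨hx.1, fun i hi => by
          rw [hx.2 i (Finset.mem_of_mem_erase hi), hεεv i (Finset.mem_of_mem_erase hi)]⟩
  -- every slice edge through v is some g j
  have hLHS : ∀ f, IsExposed ℝ P f → adim f = 1 → v ∈ f → ∃ j, j ≠ k ∧ f = g j := by
    intro f hfexp hfdim hvf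
    obtain ⟨l, hl⟩ := hfexp ⟨v, hvf⟩
    have hfP : f ⊆ P := by rw [hl]; exact fun x hx => hx.1
    have hfmax : ∀ y ∈ P, l y ≤ l v := by
      have h1 : v ∈ {x | x ∈ P ∧ ∀ y ∈ P, l y ≤ l x} := hl ▸ hvf
      exact h1.2
    have hlconst : ∀ x ∈ f, l x = l v := by
      intro x hx
      have h1 : l x ≤ l v := hfmax x (hfP hx)
      have h2 : l v ≤ l x := by
        rw [hl] at hx
        exact hx.2 v hvP
      linarith
    have hp2 : ∃ p ∈ f, p ≠ v := by
      by_contra hno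
      push_neg at hno
      have h1 : f = {v} := Set.eq_singleton_iff_unique_mem.mpr ⟨hvf, hno⟩
      rw [h1, adim_singleton] at hfdim
      exact absurd hfdim (by norm_num)
    obtain ⟨p, hpf, hpv⟩ := hp2
    set z : EuclideanSpace ℝ (Fin d) := p - v with hzdef
    have hz0 : z ≠ 0 := sub_ne_zero.mpr hpv
    have hzvs : z ∈ vectorSpan ℝ f := vsub_mem_vectorSpan ℝ hpf hvf
    have hspan : Submodule.span ℝ {z} = vectorSpan ℝ f := by
      apply Submodule.eq_of_le_of_finrank_le
      · exact (Submodule.span_singleton_le_iff_mem _ _).mpr hzvs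
      · rw [adim, direction_affineSpan] at hfdim
        rw [hfdim, finrank_span_singleton hz0]
    have hline : ∀ x ∈ f, ∃ r : ℝ, x = v + r • z := by
      intro x hx
      have h1 : x - v ∈ vectorSpan ℝ f := vsub_mem_vectorSpan ℝ hx hvf
      rw [← hspan] at h1
      obtain ⟨r, hr⟩ := Submodule.mem_span_singleton.mp h1
      exact ⟨r, by rw [hr]; abel⟩
    have hzu : ⟪u, z⟫ = 0 := by
      rw [hzdef, inner_sub_right, (hfP hpf).2, hvc, sub_self]
    have hzsign : ∀ i, i ≠ k → v i * z i ≤ 0 := by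
      intro i hik
      have hpc := (hfP hpf).1 i
      have hpi : p i = v i + z i := by
        rw [hzdef, sub_apply']
        ring
      rw [hpi, abs_le] at hpc
      rcases hv1 i hik with h | h
      · rw [h] at hpc ⊢; linarith [hpc.2]
      · rw [h] at hpc ⊢; linarith [hpc.1]
    have hlz : l z = 0 := by
      have h1 := hlconst p hpf
      rw [hzdef, map_sub, h1, sub_self]
    have hex : ∃ j, j ≠ k ∧ z j ≠ 0 := by
      by_contra hno
      push_neg at hno
      have hzk : z k = 0 := by
        rw [inner_eq_sum] at hzu
        have h1 : ∑ i, u i * z i = u k * z k := by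
          rw [Finset.sum_eq_single k
            (fun i _ hik => by show u i * z i = 0; rw [hno i hik, mul_zero])
            (fun h => absurd (Finset.mem_univ k) h)]
        rw [h1] at hzu
        rcases mul_eq_zero.mp hzu with h | h
        · exact absurd h huk
        · exact h
      apply hz0
      ext i
      by_cases hik : i = k
      · rw [hik]; exact hzk
      · exact hno i hik
    obtain ⟨j, hjk, hzj⟩ := hex
    have hzvle : ∀ i, i ≠ k → l (zvec u v k i) ≤ 0 := by
      intro i hik
      obtain ⟨δ, hδ, hm⟩ := move_mem (j := i) (c := c) huk hik hvcube hvk hvc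
      obtain ⟨hc1, hc2, _⟩ := hm δ (le_of_lt hδ) (le_refl δ)
      have h1 := hfmax _ ⟨hc1, hc2⟩
      rw [map_add, map_smul, smul_eq_mul] at h1
      nlinarith
    have hsum0 : ∑ i ∈ Finset.univ.erase k, (-(v i) * z i) * l (zvec u v k i) = 0 := by
      have h1 : l z = l (∑ i ∈ Finset.univ.erase k, (-(v i) * z i) • zvec u v k i) := by
        conv_lhs => rw [z_decomp huk hv1 hzu]
      rw [map_sum] at h1
      simp only [map_smul, smul_eq_mul] at h1
      rw [← h1]
      exact hlz
    have hterm0 := (Finset.sum_eq_zero_iff_of_nonpos (fun i hi =>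
      mul_nonpos_iff.mpr (Or.inl ⟨by linarith [hzsign i (Finset.ne_of_mem_erase hi)],
        hzvle i (Finset.ne_of_mem_erase hi)⟩))).mp hsum0
    have hqf : ∀ i, i ≠ k → z i ≠ 0 → ∃ δ : ℝ, 0 < δ ∧ v + δ • zvec u v k i ∈ f := by
      intro i hik hzi
      have hl0 : l (zvec u v k i) = 0 := by
        have h2 := hterm0 i (Finset.mem_erase.mpr ⟨hik, Finset.mem_univ i⟩)
        have hvi0 : v i ≠ 0 := by rcases hv1 i hik with h | h <;> rw [h] <;> norm_num
        have hco : -(v i) * z i ≠ 0 := mul_ne_zero (neg_ne_zero.mpr hvi0) hzi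
        rcases mul_eq_zero.mp h2 with h | h
        · exact absurd h hco
        · exact h
      obtain ⟨δ, hδ, hm⟩ := move_mem (j := i) (c := c) huk hik hvcube hvk hvc
      obtain ⟨hc1, hc2, _⟩ := hm δ (le_of_lt hδ) (le_refl δ)
      refine ⟨δ, hδ, ?_⟩
      rw [hl]
      refine ⟨⟨hc1, hc2⟩, fun y hy => ?_⟩
      rw [map_add, map_smul, smul_eq_mul, hl0, mul_zero, add_zero]
      exact hfmax y hy
    have huniq : ∀ m, m ≠ k → m ≠ j → z m = 0 := by
      intro m hmk hmj
      by_contra hzm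
      obtain ⟨δj, hδj, hqj⟩ := hqf j hjk hzj
      obtain ⟨rj, hrj⟩ := hline _ hqj
      have h1 : v m + δj * zvec u v k j m = v m + rj * z m := congrArg (fun x : EuclideanSpace ℝ (Fin d) => x m) hrj
      rw [zvec_apply_other hmj hmk, mul_zero] at h1
      have hrj0 : rj = 0 := by
        have h2 : rj * z m = 0 := by linarith
        rcases mul_eq_zero.mp h2 with h | h
        · exact h
        · exact absurd h hzm
      rw [hrj0, zero_smul, add_zero] at hrj
      have h3 : v j + δj * zvec u v k j j = v j := congrArg (fun x : EuclideanSpace ℝ (Fin d) => x j) hrj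
      rw [zvec_apply_j hjk] at h3
      have hvj0 : v j ≠ 0 := by rcases hv1 j hjk with h | h <;> rw [h] <;> norm_num
      have h4 : δj * v j = 0 := by linarith
      rcases mul_eq_zero.mp h4 with h | h
      · exact absurd h (ne_of_gt hδj)
      · exact hvj0 h
    refine ⟨j, hjk, ?_⟩
    apply Set.Subset.antisymm
    · intro x hx
      obtain ⟨r, hr⟩ := hline x hx
      have hxP := hfP hx
      refine ⟨⟨hxP.1, fun i hi => ?_⟩, hxP.2⟩
      have hij : i ≠ j := Finset.ne_of_mem_erase hi
      have hik : i ≠ k := (hmemS i).mp (Finset.mem_of_mem_erase hi)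
      have h1 : x i = v i + r * z i := by rw [hr]; rfl
      rw [h1, huniq i hik hij, mul_zero, add_zero, hεvv i hik]
    · intro x hx
      have hxP : x ∈ P := hgP j hx
      have hzmem : z ∈ Submodule.span ℝ {zvec u v k j} :=
        mem_span_zvec huk hjk (hv1 j hjk) (fun i hij hik => huniq i hik hij) hzu
      obtain ⟨ρ, hρ⟩ := Submodule.mem_span_singleton.mp hzmem
      have hρ0 : ρ ≠ 0 := by
        rintro rfl
        rw [zero_smul] at hρ
        exact hz0 hρ.symm
      have hlzv : l (zvec u v k j) = 0 := by
        have h1 : ρ * l (zvec u v k j) = 0 := by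
          rw [← smul_eq_mul, ← map_smul, hρ]
          exact hlz
        rcases mul_eq_zero.mp h1 with h | h
        · exact absurd h hρ0
        · exact h
      obtain ⟨s', hs'⟩ := Submodule.mem_span_singleton.mp (hgspan j hjk x hx)
      have hlx : l x = l v := by
        have h1 : x = v + s' • zvec u v k j := by rw [hs']; abel
        rw [h1, map_add, map_smul, smul_eq_mul, hlzv, mul_zero, add_zero]
      rw [hl]
      exact ⟨hxP, fun y hy => by rw [hlx]; exact hfmax y hy⟩
  -- assembly
  have hsetseq : {f | IsExposed ℝ P f ∧ adim f = 1 ∧ v ∈ f} = g '' {j | j ≠ k} := by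
    apply Set.Subset.antisymm
    · rintro f ⟨h1, h2, h3⟩
      obtain ⟨j, hjk, rfl⟩ := hLHS f h1 h2 h3
      exact ⟨j, hjk, rfl⟩
    · rintro f ⟨j, hjk, rfl⟩
      exact ⟨hgexp j hjk, hgdim j hjk, hvg j hjk⟩
  constructor
  · rw [hsetseq, hsquares, Set.image_image]
  · have hinjOn : Set.InjOn g {j | j ≠ k} := fun j₁ h1 j₂ h2 h12 => hginj j₁ h1 j₂ h2 h12
    rw [hsetseq, Set.ncard_image_of_injOn hinjOn]
    have h1 : {j : Fin d | j ≠ k} = ↑(Finset.univ.erase k) := by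
      ext i; simp
    rw [h1, Set.ncard_coe_finset, Finset.card_erase_of_mem (Finset.mem_univ k)]
    simp
end
end
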